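/- The space V of pairs (tree, pruning) is a left pre-Lie module over the grafting pre-Lie algebra T via the action t1 ◇ (t2, s2) := Σ_{v ∈ V(s2)} (t1 →_v t2, t1 →_v s2), i.e., for all t1, t2 ∈ T and (t3, s3) ∈ V: t1 ◇ (t2 ◇ (t3,s3)) − (t1 → t2) ◇ (t3,s3) = t2 ◇ (t1 ◇ (t3,s3)) − (t2 → t1) ◇ (t3,s3). -/

import Mathlib

open scoped TensorProduct

/-- Planar rooted trees: a tree is a root together with a list of subtrees. -/
inductive RTree : Type where
  | node : List RTree → RTree

instance : Inhabited RTree := ⟨.node []⟩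

namespace RTree

-- An injective code of a planar rooted tree.
mutual
  def code : RTree → List ℕ
    | .node ts => ts.length :: codeL ts
  def codeL : List RTree → List ℕ
    | [] => []
    | t :: ts => code t ++ codeL ts
end

/-- Lexicographic comparison of codes. -/
def lleb : List ℕ → List ℕ → Bool
  | [], _ => true
  | _ :: _, [] => false
  | a :: as, b :: bs => decide (a < b) || (decide (a = b) && lleb as bs)

-- Normal form of a rooted tree: recursively sort the lists of subtrees.
-- Two planar trees represent the same abstract rooted tree iff they have the
-- same normal form.
mutual
  def norm : RTree → RTree
    | .node ts => .node ((normL ts).mergeSort fun a b => lleb (code a) (code b))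
  def normL : List RTree → List RTree
    | [] => []
    | t :: ts => norm t :: normL ts
end

-- Number of vertices.
mutual
  def size : RTree → ℕ
    | .node ts => 1 + sizeL ts
  def sizeL : List RTree → ℕ
    | [] => 0
    | t :: ts => size t + sizeL ts
end

-- Vertices of a tree, as positions (paths of child indices from the root).
mutual
  def vertices : RTree → List (List ℕ)
    | .node ts => [] :: verticesL 0 ts
  def verticesL : ℕ → List RTree → List (List ℕ)
    | _, [] => []
    | i, t :: ts => (vertices t).map (i :: ·) ++ verticesL (i + 1) ts
end

/-- `graftAt t p s` grafts the root of `t` on the vertex at position `p` of `s`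
(the new subtree is appended at the end, so positions of `s` are unchanged). -/
def graftAt (t : RTree) : List ℕ → RTree → RTree
  | [], .node ts => .node (ts ++ [t])
  | i :: q, .node ts =>
      .node (ts.set i (graftAt t q (ts.getD i (.node []))))

end RTree

/-- Abstract rooted trees: planar trees up to sibling permutation. -/
instance treeSetoid : Setoid RTree :=
  ⟨fun a b => a.norm = b.norm, ⟨fun _ => rfl, Eq.symm, Eq.trans⟩⟩

abbrev TreeQ := Quotient treeSetoid

def tq (t : RTree) : TreeQ := Quotient.mk treeSetoid t

/-- A forest, as a multiset of abstract rooted trees. -/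
def forestQ (l : List RTree) : Multiset TreeQ := (l.map tq : List TreeQ)

/-- The vector space `T` spanned by rooted trees. -/
abbrev TM := TreeQ →₀ ℚ

noncomputable def δT (t : RTree) : TM := Finsupp.single (tq t) 1

/-- `t → s`: the sum of all graftings of `t` on the vertices of `s`. -/
noncomputable def graftSum (t s : RTree) : TM :=
  ((RTree.vertices s).map fun p => δT (RTree.graftAt t p s)).sum

/-- The bilinear extension of the grafting product to `T`. -/
noncomputable def pre (a b : TM) : TM :=
  a.sum fun q c => b.sum fun r d => (c * d) • graftSum q.out r.out
/-- Rooted trees with a set of marked ("cut") edges: each child edge carries a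
Boolean which is `true` iff the edge belongs to the cut. -/
inductive CTree : Type where
  | node : List (Bool × CTree) → CTree

instance : Inhabited CTree := ⟨.node []⟩

namespace CTree

-- The underlying tree `t`.
mutual
  def forget : CTree → RTree
    | .node ts => .node (forgetL ts)
  def forgetL : List (Bool × CTree) → List RTree
    | [] => []
    | (_, c) :: ts => forget c :: forgetL ts
end

-- A tree with no marked edge at all.
mutual
  def noMarks : CTree → Bool
    | .node ts => noMarksL ts
  def noMarksL : List (Bool × CTree) → Bool
    | [] => true
    | (b, c) :: ts => !b && noMarks c && noMarksL ts
end

-- Admissibility of the cut: no marked edge above another marked edge,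
-- i.e. every path from the root to a leaf contains at most one cut edge.
mutual
  def adm : CTree → Bool
    | .node ts => admL ts
  def admL : List (Bool × CTree) → Bool
    | [] => true
    | (b, c) :: ts => (if b then noMarks c else adm c) && admL ts
end

-- The pruning `P^c(t)`: the subforest above the cut.
mutual
  def pruneF : CTree → List RTree
    | .node ts => pruneFL ts
  def pruneFL : List (Bool × CTree) → List RTree
    | [] => []
    | (b, c) :: ts => (if b then [forget c] else pruneF c) ++ pruneFL ts
end

-- The trunk `R^c(t)`: the subtree below the cut (containing the root).
mutual
  def trunk : CTree → RTree
    | .node ts => .node (trunkL ts)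
  def trunkL : List (Bool × CTree) → List RTree
    | [] => []
    | (b, c) :: ts => (if b then [] else [trunk c]) ++ trunkL ts
end

-- All vertex positions of the underlying tree.
mutual
  def allPos : CTree → List (List ℕ)
    | .node ts => [] :: allPosL 0 ts
  def allPosL : ℕ → List (Bool × CTree) → List (List ℕ)
    | _, [] => []
    | i, (_, c) :: ts => (allPos c).map (i :: ·) ++ allPosL (i + 1) ts
end

-- Positions of the vertices lying strictly above the cut (vertices of the pruning).
mutual
  def prunePos : CTree → List (List ℕ)
    | .node ts => prunePosL 0 ts
  def prunePosL : ℕ → List (Bool × CTree) → List (List ℕ)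
    | _, [] => []
    | i, (b, c) :: ts =>
        (if b then (allPos c).map (i :: ·) else (prunePos c).map (i :: ·)) ++
          prunePosL (i + 1) ts
end

-- Positions of the vertices of the trunk (not above the cut).
mutual
  def trunkPos : CTree → List (List ℕ)
    | .node ts => [] :: trunkPosL 0 ts
  def trunkPosL : ℕ → List (Bool × CTree) → List (List ℕ)
    | _, [] => []
    | i, (b, c) :: ts =>
        (if b then [] else (trunkPos c).map (i :: ·)) ++ trunkPosL (i + 1) ts
end

-- A plain tree viewed as a cut tree with no marks.
mutual
  def ofTree : RTree → CTree
    | .node ts => .node (ofTreeL ts)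
  def ofTreeL : List RTree → List (Bool × CTree)
    | [] => []
    | t :: ts => (false, ofTree t) :: ofTreeL ts
end

/-- `cgraft x p c` grafts the cut tree `x` (root edge unmarked) at the vertex
at position `p` of `c` (appended last, so positions of `c` are unchanged). -/
def cgraft (x : CTree) : List ℕ → CTree → CTree
  | [], .node ts => .node (ts ++ [(false, x)])
  | i :: q, .node ts =>
      .node (ts.set i
        ((ts.getD i (false, .node [])).1,
          cgraft x q (ts.getD i (false, .node [])).2))

-- injective code and normal form, as for plain trees
mutual
  def code : CTree → List ℕ
    | .node ts => ts.length :: codeL ts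
  def codeL : List (Bool × CTree) → List ℕ
    | [] => []
    | (b, c) :: ts => (if b then 1 else 0) :: (code c ++ codeL ts)
end

mutual
  def cnorm : CTree → CTree
    | .node ts =>
        .node ((cnormL ts).mergeSort fun a b =>
          RTree.lleb ((if a.1 then 1 else 0) :: code a.2) ((if b.1 then 1 else 0) :: code b.2))
  def cnormL : List (Bool × CTree) → List (Bool × CTree)
    | [] => []
    | (b, c) :: ts => (b, cnorm c) :: cnormL ts
end

end CTree

/-- Cut trees up to sibling permutation. -/
instance ctreeSetoid : Setoid CTree :=
  ⟨fun a b => a.cnorm = b.cnorm, ⟨fun _ => rfl, Eq.symm, Eq.trans⟩⟩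

abbrev CQ := Quotient ctreeSetoid

def cq (c : CTree) : CQ := Quotient.mk ctreeSetoid c
/-- The pair `(t, s)` (underlying tree, pruning) attached to a cut tree. -/
noncomputable def pairQ (c : CTree) : TreeQ × Multiset TreeQ :=
  (tq c.forget, forestQ c.pruneF)

/-- The module spanned by pairs (tree, forest); it contains the doubling
space `V` spanned by the pairs (tree, pruning of that tree). -/
abbrev MV := (TreeQ × Multiset TreeQ) →₀ ℚ

noncomputable def δV (c : CTree) : MV := Finsupp.single (pairQ c) 1

noncomputable def toMV (l : List CTree) : MV := (l.map δV).sum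

/-- `(t, s)` belongs to the doubling space `V`, i.e. `s` is the pruning of `t`
along some admissible cut. -/
def PairInV (p : TreeQ × Multiset TreeQ) : Prop :=
  ∃ c : CTree, c.adm = true ∧ pairQ c = p

/-- The doubling pre-Lie product `⤳` at the level of cut trees:
graft the first tree on each vertex of the second one which is not a
vertex of its pruning (i.e. on each trunk vertex). -/
def dmul (c₁ c₂ : CTree) : List CTree :=
  (CTree.trunkPos c₂).map fun p => CTree.cgraft c₁ p c₂

/-- The action `◇` of a tree on the doubling space: graft the tree on each
vertex of the pruning. -/
def dAct (t : RTree) (c : CTree) : List CTree :=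
  (CTree.prunePos c).map fun p => CTree.cgraft (CTree.ofTree t) p c

/-- `t → s` at list level: all graftings of `t` on vertices of `s`. -/
def rmulAll (t s : RTree) : List RTree :=
  (RTree.vertices s).map fun p => RTree.graftAt t p s

/-- All graftings of a tree on the vertices of a forest. -/
def fgraftAll (t : RTree) (f : List RTree) : List (List RTree) :=
  (List.range f.length).flatMap fun i =>
    (rmulAll t (f.getD i default)).map fun w => f.set i w

-- Admissible cuts of a tree/forest, with the associated (pruning, trunk).
mutual
  def treeCuts : RTree → List (List RTree × List RTree)
    | .node ts =>
        ([.node ts], []) ::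
          (forestCuts ts).map fun pr => (pr.1, [RTree.node pr.2])
  def forestCuts : List RTree → List (List RTree × List RTree)
    | [] => [([], [])]
    | t :: ts =>
        (treeCuts t).flatMap fun pr =>
          (forestCuts ts).map fun qr => (pr.1 ++ qr.1, pr.2 ++ qr.2)
end
-- The coproduct of the doubling bialgebra at the level of cut trees:
-- `delta c` enumerates the admissible cuts `c'` of the pruning `s` of `c`,
-- returning the pair of cut trees representing `(t, P^{c'}(s))` and
-- `(R^{c'}(t), R^{c'}(s))`.
mutual
  def cutsP : CTree → List (CTree × CTree)
    | .node ts => (cutsPL ts).map fun pr => (.node pr.1, .node pr.2)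
  def cutsPL : List (Bool × CTree) → List (List (Bool × CTree) × List (Bool × CTree))
    | [] => [([], [])]
    | (_, c) :: ts =>
        (cutsPL ts).flatMap fun pr =>
          ((true, c) :: pr.1, pr.2) ::
            (cutsP c).map fun qr => ((false, qr.1) :: pr.1, (false, qr.2) :: pr.2)
end

mutual
  def delta : CTree → List (CTree × CTree)
    | .node ts => (deltaL ts).map fun pr => (.node pr.1, .node pr.2)
  def deltaL : List (Bool × CTree) → List (List (Bool × CTree) × List (Bool × CTree))
    | [] => [([], [])]
    | (b, c) :: ts =>
        (deltaL ts).flatMap fun pr =>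
          if b then
            ((true, c) :: pr.1, pr.2) ::
              (cutsP c).map fun qr => ((false, qr.1) :: pr.1, (true, qr.2) :: pr.2)
          else
            (delta c).map fun qr => ((false, qr.1) :: pr.1, (false, qr.2) :: pr.2)
end

/-- The Connes–Kreimer Hopf algebra of rooted trees `H = S(T)`,
with basis the forests (multisets of rooted trees). -/
abbrev HCK := AddMonoidAlgebra ℚ (Multiset TreeQ)

noncomputable def singleH (f : Multiset TreeQ) : HCK := AddMonoidAlgebra.single f 1

noncomputable def oneH : HCK := AddMonoidAlgebra.single 0 1

noncomputable def δH (t : RTree) : HCK := singleH {tq t}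

/-- The doubling bialgebra `D = S(V)`, with basis the multisets of
(isomorphism classes of admissibly) cut trees. -/
abbrev DD := AddMonoidAlgebra ℚ (Multiset CQ)

noncomputable def singleD (m : Multiset CQ) : DD := AddMonoidAlgebra.single m 1

noncomputable def δD (c : CTree) : DD := singleD {cq c}

noncomputable def cfq (f : List CTree) : Multiset CQ := (f.map cq : List CQ)

/-- Admissible-cut coproduct on `H`, on a single tree. -/
noncomputable def ΔT (t : RTree) : HCK ⊗[ℚ] HCK :=
  ((treeCuts t).map fun pr => singleH (forestQ pr.1) ⊗ₜ[ℚ] singleH (forestQ pr.2)).sum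

/-- Admissible-cut coproduct on `H`, as a linear map (multiplicative on forests). -/
noncomputable def ΔH : HCK →ₗ[ℚ] HCK ⊗[ℚ] HCK :=
  (Finsupp.lsum ℚ fun m =>
    LinearMap.toSpanSingleton ℚ _ ((m.map fun q => ΔT q.out).prod)) ∘ₗ
    (AddMonoidAlgebra.coeffLinearEquiv ℚ).toLinearMap

/-- The coproduct of the doubling bialgebra on a single pair. -/
noncomputable def ΔVt (c : CTree) : DD ⊗[ℚ] DD :=
  ((delta c).map fun pr => δD pr.1 ⊗ₜ[ℚ] δD pr.2).sum

/-- The coproduct of the doubling bialgebra, as a linear map `D → D ⊗ D`. -/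
noncomputable def ΔD : DD →ₗ[ℚ] DD ⊗[ℚ] DD :=
  (Finsupp.lsum ℚ fun m =>
    LinearMap.toSpanSingleton ℚ _ ((m.map fun q => ΔVt q.out).prod)) ∘ₗ
    (AddMonoidAlgebra.coeffLinearEquiv ℚ).toLinearMap

/-- The counit of the doubling bialgebra: `ε (t, s) = ε (s)`. -/
noncomputable def εD : DD →ₗ[ℚ] ℚ :=
  (Finsupp.lsum ℚ fun m =>
    LinearMap.toSpanSingleton ℚ _
      ((m.map fun q => if (Quotient.out q).pruneF.length = 0 then (1 : ℚ) else 0).prod)) ∘ₗ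
    (AddMonoidAlgebra.coeffLinearEquiv ℚ).toLinearMap

/-- The unshuffling coproduct `Γ` of `H' = S(T)`. -/
noncomputable def ΓH : HCK →ₗ[ℚ] HCK ⊗[ℚ] HCK :=
  (Finsupp.lsum ℚ fun m =>
    LinearMap.toSpanSingleton ℚ _
      (((Multiset.antidiagonal m).map fun pq => singleH pq.1 ⊗ₜ[ℚ] singleH pq.2).sum)) ∘ₗ
    (AddMonoidAlgebra.coeffLinearEquiv ℚ).toLinearMap

/-- The unshuffling coproduct `χ` of `D' = S(V)`. -/
noncomputable def χD : DD →ₗ[ℚ] DD ⊗[ℚ] DD :=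
  (Finsupp.lsum ℚ fun m =>
    LinearMap.toSpanSingleton ℚ _
      (((Multiset.antidiagonal m).map fun pq => singleD pq.1 ⊗ₜ[ℚ] singleD pq.2).sum)) ∘ₗ
    (AddMonoidAlgebra.coeffLinearEquiv ℚ).toLinearMap

/-- The second projection `P₂ (t, s) = s`, as a linear map `D → H`. -/
noncomputable def P₂ : DD →ₗ[ℚ] HCK :=
  (Finsupp.lsum ℚ fun m =>
    LinearMap.toSpanSingleton ℚ _ (singleH ((m.map fun q => forestQ (Quotient.out q).pruneF).sum))) ∘ₗ
    (AddMonoidAlgebra.coeffLinearEquiv ℚ).toLinearMap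
/-- Representative forest (list of planar trees) of a multiset of tree classes. -/
noncomputable def repT (m : Multiset TreeQ) : List RTree := m.toList.map Quotient.out

/-- A single tree acting by grafting on `H` (extended Oudom–Guin `▷` of a tree
on products: graft on one factor of each forest). -/
noncomputable def rrtrT (t : RTree) (x : HCK) : HCK :=
  x.coeff.sum fun m r => r • ((fgraftAll t (repT m)).map fun f => singleH (forestQ f)).sum

/-- The Oudom–Guin extension of the grafting pre-Lie product of rooted trees to
forests: `1 ▷ b = b`, `(x a) ▷ b = x ▷ (a ▷ b) - (x ▷ a) ▷ b`
(defined with a fuel argument equal to the length of the forest). -/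
noncomputable def rrtrL : ℕ → List RTree → HCK → HCK
  | _, [], x => x
  | 0, _ :: _, _ => 0
  | n + 1, t :: a, x =>
      rrtrT t (rrtrL n a x) - ((fgraftAll t a).map fun b => rrtrL n b x).sum

noncomputable def rrtrF (a : List RTree) (x : HCK) : HCK := rrtrL a.length a x

/-- The Oudom–Guin product `⋆` on `H' = S(T)`:
`a ⋆ b = Σ a⁽¹⁾ (a⁽²⁾ ▷ b)`. -/
noncomputable def starH (x y : HCK) : HCK :=
  x.coeff.sum fun m r =>
    r • ((Multiset.antidiagonal m).map fun pq => singleH pq.1 * rrtrF (repT pq.2) y).sum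

/-- The module of pairs of forests (first component ⊗ pruning component),
receiving both `D'` and the image of the map `α`. -/
abbrev WD := (Multiset TreeQ × Multiset TreeQ) →₀ ℚ

/-- `α ((f, s) ⊗ y) = (f ⋆ y, s)`. -/
noncomputable def alphaW (x : WD) (y : HCK) : WD :=
  x.sum fun p c =>
    c • Finsupp.mapDomain (fun g => (g, p.2)) (starH (singleH p.1) y).coeff

/-- Representative list of cut trees of a multiset of cut-tree classes. -/
noncomputable def repC (m : Multiset CQ) : List CTree := m.toList.map Quotient.out

/-- Graftings of a cut tree on one factor of a forest of cut trees, where the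
admitted grafting positions on each factor are prescribed by `g`. -/
def fgraftC (g : CTree → CTree → List CTree) (c : CTree) (f : List CTree) :
    List (List CTree) :=
  (List.range f.length).flatMap fun i =>
    (g c (f.getD i default)).map fun w => f.set i w

/-- all-vertex graftings of a cut tree on a cut tree (used for the `H'`-product
acting on the first components). -/
def dmulAll (c₁ c₂ : CTree) : List CTree :=
  (CTree.allPos c₂).map fun p => CTree.cgraft c₁ p c₂

noncomputable def singleDF (f : List CTree) : DD := singleD (cfq f)

/-- A single cut tree acting on `D` by `g`-grafting on one factor. -/
noncomputable def crtrT (g : CTree → CTree → List CTree) (c : CTree) (x : DD) : DD :=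
  x.coeff.sum fun m r => r • ((fgraftC g c (repC m)).map singleDF).sum

/-- Oudom–Guin extension of the `g`-grafting pre-Lie product to forests of cut
trees (fuel version). -/
noncomputable def crtrL (g : CTree → CTree → List CTree) : ℕ → List CTree → DD → DD
  | _, [], x => x
  | 0, _ :: _, _ => 0
  | n + 1, c :: a, x =>
      crtrT g c (crtrL g n a x) - ((fgraftC g c a).map fun b => crtrL g n b x).sum

noncomputable def crtrF (g : CTree → CTree → List CTree) (a : List CTree) (x : DD) : DD :=
  crtrL g a.length a x

/-- Oudom–Guin product on `S` of cut trees associated with the grafting rule `g`. -/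
noncomputable def starC (g : CTree → CTree → List CTree) (x y : DD) : DD :=
  x.coeff.sum fun m r =>
    r • ((Multiset.antidiagonal m).map fun pq => singleD pq.1 * crtrF g (repC pq.2) y).sum

/-- The Oudom–Guin product `★` of the doubling pre-Lie algebra `(V, ⤳)`. -/
noncomputable def starD : DD → DD → DD := starC dmul

/-- The Oudom–Guin product `⋆` of `(T, →)` acting on decorated elements
(grafting on all vertices). -/
noncomputable def starDAll : DD → DD → DD := starC dmulAll

/-- `H'` embedded in the decorated algebra (forests with no cut edge). -/
noncomputable def embedH (x : HCK) : DD :=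
  x.coeff.sum fun m r => AddMonoidAlgebra.single (m.map fun q => cq (CTree.ofTree (Quotient.out q))) r

/-- The action `α (x ⊗ y) = (t ⋆ y, s)` computed on decorated elements. -/
noncomputable def alphaD (x : DD) (y : HCK) : DD := starDAll x (embedH y)

/-- Projection of a decorated element onto the pair
`(underlying forest, total pruning)`. -/
noncomputable def πD : DD →ₗ[ℚ] WD :=
  (Finsupp.lsum ℚ fun m =>
    LinearMap.toSpanSingleton ℚ _
      (Finsupp.single
        (m.map fun q => tq (Quotient.out q).forget,
          (m.map fun q => forestQ (Quotient.out q).pruneF).sum) (1 : ℚ))) ∘ₗ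
    (AddMonoidAlgebra.coeffLinearEquiv ℚ).toLinearMap


section AuxDev
open List

namespace RTree

theorem normL_eq (l : List RTree) : normL l = l.map norm := by
  induction l with
  | nil => simp [normL]
  | cons t ts ih => simp [normL, ih]

mutual
  theorem code_inj : ∀ (t t' : RTree) (u u' : List ℕ),
      code t ++ u = code t' ++ u' → t = t' ∧ u = u'
    | .node ts, .node ts', u, u', h => by
      simp only [code, List.cons_append, List.cons.injEq] at h
      obtain ⟨hlen, h2⟩ := h
      obtain ⟨h3, h4⟩ := codeL_inj ts ts' u u' hlen h2
      exact ⟨by rw [h3], h4⟩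
  theorem codeL_inj : ∀ (ts ts' : List RTree) (u u' : List ℕ),
      ts.length = ts'.length → codeL ts ++ u = codeL ts' ++ u' → ts = ts' ∧ u = u'
    | [], [], u, u', _, h => by simpa [codeL] using h
    | t :: ts, t' :: ts', u, u', hlen, h => by
      simp only [codeL, List.append_assoc] at h
      obtain ⟨h1, h2⟩ := code_inj t t' _ _ h
      obtain ⟨h3, h4⟩ := codeL_inj ts ts' u u' (by simpa using hlen) h2
      exact ⟨by rw [h1, h3], h4⟩
end

theorem lleb_trans : ∀ (a b c : List ℕ), lleb a b = true → lleb b c = true → lleb a c = true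
  | [], _, _, _, _ => by simp [lleb]
  | x :: as, [], _, h, _ => by simp [lleb] at h
  | x :: as, y :: bs, [], _, h => by simp [lleb] at h
  | x :: as, y :: bs, z :: cs, h1, h2 => by
    simp only [lleb, Bool.or_eq_true, decide_eq_true_eq, Bool.and_eq_true] at *
    rcases h1 with h1 | ⟨h1, h1'⟩ <;> rcases h2 with h2 | ⟨h2, h2'⟩
    · exact Or.inl (h1.trans h2)
    · exact Or.inl (h2 ▸ h1)
    · exact Or.inl (h1 ▸ h2)
    · exact Or.inr ⟨h1.trans h2, lleb_trans _ _ _ h1' h2'⟩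

theorem lleb_total : ∀ (a b : List ℕ), (lleb a b || lleb b a) = true
  | [], _ => by simp [lleb]
  | x :: as, [] => by simp [lleb]
  | x :: as, y :: bs => by
    simp only [lleb, Bool.or_eq_true, decide_eq_true_eq, Bool.and_eq_true]
    rcases Nat.lt_trichotomy x y with h | h | h
    · exact Or.inl (Or.inl h)
    · rcases Bool.or_eq_true _ _ |>.mp (lleb_total as bs) with h' | h'
      · exact Or.inl (Or.inr ⟨h, h'⟩)
      · exact Or.inr (Or.inr ⟨h.symm, h'⟩)
    · exact Or.inr (Or.inl h)

theorem lleb_antisymm : ∀ (a b : List ℕ), lleb a b = true → lleb b a = true → a = b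
  | [], [], _, _ => rfl
  | [], _ :: _, _, h => by simp [lleb] at h
  | _ :: _, [], h, _ => by simp [lleb] at h
  | x :: as, y :: bs, h1, h2 => by
    simp only [lleb, Bool.or_eq_true, decide_eq_true_eq, Bool.and_eq_true] at h1 h2
    rcases h1 with h1 | ⟨h1, h1'⟩ <;> rcases h2 with h2 | ⟨h2, h2'⟩ <;> try omega
    rw [h1, lleb_antisymm _ _ h1' h2']

theorem mergeSort_congr {l l' : List RTree} (h : l.Perm l') :
    l.mergeSort (fun a b => lleb (code a) (code b)) =
      l'.mergeSort (fun a b => lleb (code a) (code b)) := by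
  have tr : ∀ a b c : RTree, lleb (code a) (code b) = true → lleb (code b) (code c) = true →
      lleb (code a) (code c) = true := fun a b c => lleb_trans _ _ _
  have tot : ∀ a b : RTree, (lleb (code a) (code b) || lleb (code b) (code a)) = true :=
    fun a b => lleb_total _ _
  haveI : Std.Antisymm (fun a b : RTree => lleb (code a) (code b) = true) := ⟨fun a b h1 h2 => by
    have hc := lleb_antisymm _ _ h1 h2
    exact (code_inj a b [] [] (by simpa using hc)).1⟩
  haveI : IsAntisymm RTree (fun a b => lleb (code a) (code b) = true) := ⟨fun a b h1 h2 => by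
    have hc := lleb_antisymm _ _ h1 h2
    exact (code_inj a b [] [] (by simpa using hc)).1⟩
  exact List.Perm.eq_of_pairwise'
    (List.pairwise_mergeSort tr tot l) (List.pairwise_mergeSort tr tot l')
    ((List.mergeSort_perm l _).trans (h.trans (List.mergeSort_perm l' _).symm))

end RTree

theorem tq_eq_iff {a b : RTree} : tq a = tq b ↔ a.norm = b.norm := by
  rw [tq, tq, Quotient.eq]
  rfl

theorem tq_node_perm {l l' : List RTree} (h : l.Perm l') :
    tq (.node l) = tq (.node l') := by
  rw [tq_eq_iff]
  simp only [RTree.norm, RTree.normL_eq]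
  rw [RTree.mergeSort_congr (h.map _)]

theorem tq_node_set {L : List RTree} {i : ℕ} {A A' : RTree} (h : A.norm = A'.norm) :
    tq (.node (L.set i A)) = tq (.node (L.set i A')) := by
  rw [tq_eq_iff]
  simp only [RTree.norm, RTree.normL_eq, List.map_set, h]

theorem forestQ_perm {a b : List RTree} (h : a.Perm b) : forestQ a = forestQ b :=
  Multiset.coe_eq_coe.mpr (h.map tq)

theorem forestQ_append (a b : List RTree) : forestQ (a ++ b) = forestQ a + forestQ b := by
  simp [forestQ, Multiset.coe_add]

theorem forestQ_singleton (t : RTree) : forestQ [t] = {tq t} := by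
  simp [forestQ]

end AuxDev
section AuxDev2
open List

namespace CTree

def dflt : Bool × CTree := (false, .node [])

theorem forgetL_eq (l : List (Bool × CTree)) :
    forgetL l = l.map (fun e => forget e.2) := by
  induction l with
  | nil => simp [forgetL]
  | cons e ts ih => obtain ⟨b, c⟩ := e; simp [forgetL, ih]

theorem pruneFL_eq (l : List (Bool × CTree)) :
    pruneFL l = l.flatMap (fun e => if e.1 then [forget e.2] else pruneF e.2) := by
  induction l with
  | nil => simp [pruneFL]
  | cons e ts ih => obtain ⟨b, c⟩ := e; simp [pruneFL, ih]

theorem ofTreeL_eq (l : List RTree) :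
    ofTreeL l = l.map (fun t => (false, ofTree t)) := by
  induction l with
  | nil => simp [ofTreeL]
  | cons t ts ih => simp [ofTreeL, ih]

/-- arity (number of children) at a position. -/
def carity : List ℕ → CTree → ℕ
  | [], .node ts => ts.length
  | i :: p, .node ts => carity p (ts.getD i dflt).2

theorem allPosL_append : ∀ (a b : List (Bool × CTree)) (n : ℕ),
    allPosL n (a ++ b) = allPosL n a ++ allPosL (n + a.length) b
  | [], b, n => by simp [allPosL]
  | e :: a, b, n => by
    obtain ⟨bb, c⟩ := e
    simp [allPosL, allPosL_append a b (n+1), List.append_assoc]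
    ring_nf

theorem prunePosL_append : ∀ (a b : List (Bool × CTree)) (n : ℕ),
    prunePosL n (a ++ b) = prunePosL n a ++ prunePosL (n + a.length) b
  | [], b, n => by simp [prunePosL]
  | e :: a, b, n => by
    obtain ⟨bb, c⟩ := e
    simp [prunePosL, prunePosL_append a b (n+1), List.append_assoc]
    ring_nf

theorem mem_allPosL : ∀ (ts : List (Bool × CTree)) (n : ℕ) (p : List ℕ),
    p ∈ allPosL n ts ↔
      ∃ j q, j < ts.length ∧ p = (n + j) :: q ∧ q ∈ allPos (ts.getD j dflt).2
  | [], n, p => by simp [allPosL]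
  | (b, c) :: ts, n, p => by
    simp only [allPosL, List.mem_append, List.mem_map, mem_allPosL ts (n+1) p]
    constructor
    · rintro (⟨q, hq, rfl⟩ | ⟨j, q, hj, rfl, hq⟩)
      · exact ⟨0, q, by simpa using hq⟩
      · exact ⟨j + 1, q, by simpa using hj, by rw [List.cons.injEq]; exact ⟨by omega, rfl⟩,
          by simpa using hq⟩
    · rintro ⟨j, q, hj, rfl, hq⟩
      cases j with
      | zero => exact Or.inl ⟨q, by simpa using hq, by simp⟩
      | succ j => exact Or.inr ⟨j, q, by simpa using hj,
          by rw [List.cons.injEq]; exact ⟨by omega, rfl⟩, by simpa using hq⟩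

theorem mem_prunePosL : ∀ (ts : List (Bool × CTree)) (n : ℕ) (p : List ℕ),
    p ∈ prunePosL n ts ↔
      ∃ j q, j < ts.length ∧ p = (n + j) :: q ∧
        (if (ts.getD j dflt).1 then q ∈ allPos (ts.getD j dflt).2
         else q ∈ prunePos (ts.getD j dflt).2)
  | [], n, p => by simp [prunePosL]
  | (b, c) :: ts, n, p => by
    have hrec := mem_prunePosL ts (n+1) p
    cases b <;>
    · simp only [prunePosL, List.mem_append, List.mem_map, hrec, if_true, if_false,
        Bool.false_eq_true]
      constructor
      · rintro (⟨q, hq, rfl⟩ | ⟨j, q, hj, rfl, hq⟩)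
        · exact ⟨0, q, by simp, by simp, by simpa using hq⟩
        · exact ⟨j + 1, q, by simpa using hj, by rw [List.cons.injEq]; exact ⟨by omega, rfl⟩,
            by simpa using hq⟩
      · rintro ⟨j, q, hj, rfl, hq⟩
        cases j with
        | zero => exact Or.inl ⟨q, by simpa using hq, by simp⟩
        | succ j => exact Or.inr ⟨j, q, by simpa using hj,
            by rw [List.cons.injEq]; exact ⟨by omega, rfl⟩, by simpa using hq⟩

theorem mem_allPos_cons {ts : List (Bool × CTree)} {i : ℕ} {q : List ℕ} :
    (i :: q) ∈ allPos (.node ts) ↔ i < ts.length ∧ q ∈ allPos (ts.getD i dflt).2 := by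
  simp only [allPos, List.mem_cons, mem_allPosL]
  constructor
  · rintro (h | ⟨j, q', hj, h, hq⟩)
    · simp at h
    · rw [List.cons.injEq] at h
      obtain ⟨rfl, rfl⟩ : i = j ∧ q = q' := ⟨by omega, h.2⟩
      exact ⟨hj, hq⟩
  · rintro ⟨hi, hq⟩
    exact Or.inr ⟨i, q, hi, by simp, hq⟩

theorem prunePos_subset_allPos : ∀ (p : List ℕ) (c : CTree), p ∈ prunePos c → p ∈ allPos c
  | [], .node ts, h => by
    rw [prunePos, mem_prunePosL] at h
    obtain ⟨j, q, _, h, _⟩ := h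
    simp at h
  | i :: q, .node ts, h => by
    rw [prunePos, mem_prunePosL] at h
    obtain ⟨j, q', hj, he, hq⟩ := h
    rw [List.cons.injEq] at he
    obtain ⟨rfl, rfl⟩ : i = j ∧ q = q' := ⟨by omega, he.2⟩
    rw [mem_allPos_cons]
    refine ⟨hj, ?_⟩
    by_cases hb : (ts.getD i dflt).1
    · rw [if_pos hb] at hq
      exact hq
    · rw [if_neg hb] at hq
      exact prunePos_subset_allPos q _ hq

end CTree
end AuxDev2
section AuxDev3
open List

namespace CTree

theorem cgraft_nil (x : CTree) (ts : List (Bool × CTree)) :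
    cgraft x [] (.node ts) = .node (ts ++ [(false, x)]) := rfl

theorem cgraft_cons (x : CTree) (i : ℕ) (q : List ℕ) (ts : List (Bool × CTree)) :
    cgraft x (i :: q) (.node ts) =
      .node (ts.set i ((ts.getD i dflt).1, cgraft x q (ts.getD i dflt).2)) := rfl

theorem carity_nil (ts : List (Bool × CTree)) : carity [] (.node ts) = ts.length := rfl

theorem carity_cons (i : ℕ) (q : List ℕ) (ts : List (Bool × CTree)) :
    carity (i :: q) (.node ts) = carity q (ts.getD i dflt).2 := rfl

theorem allPos_node (ts : List (Bool × CTree)) :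
    allPos (.node ts) = [] :: allPosL 0 ts := rfl

theorem prunePos_node (ts : List (Bool × CTree)) :
    prunePos (.node ts) = prunePosL 0 ts := rfl

theorem allPosL_cons (e : Bool × CTree) (l : List (Bool × CTree)) (n : ℕ) :
    allPosL n (e :: l) = (allPos e.2).map (n :: ·) ++ allPosL (n + 1) l := by
  obtain ⟨b, c⟩ := e; simp [allPosL]

/-- contribution of one child to prunePos. -/
def contrib (e : Bool × CTree) : List (List ℕ) :=
  if e.1 then allPos e.2 else prunePos e.2

theorem prunePosL_cons (e : Bool × CTree) (l : List (Bool × CTree)) (n : ℕ) :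
    prunePosL n (e :: l) = (contrib e).map (n :: ·) ++ prunePosL (n + 1) l := by
  obtain ⟨b, c⟩ := e; cases b <;> simp [prunePosL, contrib]

theorem list_decomp {α : Type*} (ts : List α) (i : ℕ) (hi : i < ts.length) :
    ts = ts.take i ++ ts[i] :: ts.drop (i + 1) := by
  rw [← List.drop_eq_getElem_cons hi, List.take_append_drop]

theorem allPosL_set {ts : List (Bool × CTree)} {i : ℕ} (hi : i < ts.length)
    (e : Bool × CTree) {E : List (List ℕ)}
    (He : (↑(allPos e.2) : Multiset (List ℕ)) = ↑(allPos (ts.getD i dflt).2) + ↑E) (n : ℕ) :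
    (↑(allPosL n (ts.set i e)) : Multiset (List ℕ)) =
      ↑(allPosL n ts) + ↑(E.map ((n + i) :: ·)) := by
  have hset : ts.set i e = ts.take i ++ e :: ts.drop (i + 1) := by
    rw [List.set_eq_take_append_cons_drop, if_pos hi]
  have hlen : (ts.take i).length = i := by simp [List.length_take]; omega
  rw [List.getD_eq_getElem ts dflt hi] at He
  conv_lhs => rw [hset]
  conv_rhs => rw [list_decomp ts i hi]
  rw [allPosL_append, allPosL_cons, allPosL_append, allPosL_cons, hlen]
  simp only [← Multiset.coe_add]
  have hm : (↑((allPos e.2).map ((n + i) :: ·)) : Multiset (List ℕ)) =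
      ↑((allPos ts[i].2).map ((n + i) :: ·)) + ↑(E.map ((n + i) :: ·)) := by
    rw [Multiset.coe_eq_coe.mpr, Multiset.coe_add]
    exact ((Multiset.coe_eq_coe.mp He).map _).trans (by rw [List.map_append])
  rw [hm]
  abel

theorem prunePosL_set {ts : List (Bool × CTree)} {i : ℕ} (hi : i < ts.length)
    (e : Bool × CTree) {E : List (List ℕ)}
    (He : (↑(contrib e) : Multiset (List ℕ)) = ↑(contrib (ts.getD i dflt)) + ↑E) (n : ℕ) :
    (↑(prunePosL n (ts.set i e)) : Multiset (List ℕ)) =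
      ↑(prunePosL n ts) + ↑(E.map ((n + i) :: ·)) := by
  have hset : ts.set i e = ts.take i ++ e :: ts.drop (i + 1) := by
    rw [List.set_eq_take_append_cons_drop, if_pos hi]
  have hlen : (ts.take i).length = i := by simp [List.length_take]; omega
  rw [List.getD_eq_getElem ts dflt hi] at He
  conv_lhs => rw [hset]
  conv_rhs => rw [list_decomp ts i hi]
  rw [prunePosL_append, prunePosL_cons, prunePosL_append, prunePosL_cons, hlen]
  simp only [← Multiset.coe_add]
  have hm : (↑((contrib e).map ((n + i) :: ·)) : Multiset (List ℕ)) =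
      ↑((contrib ts[i]).map ((n + i) :: ·)) + ↑(E.map ((n + i) :: ·)) := by
    rw [Multiset.coe_eq_coe.mpr, Multiset.coe_add]
    exact ((Multiset.coe_eq_coe.mp He).map _).trans (by rw [List.map_append])
  rw [hm]
  abel

theorem allPos_cgraft : ∀ (p : List ℕ) (c : CTree) (x : CTree), p ∈ allPos c →
    (↑(allPos (cgraft x p c)) : Multiset (List ℕ)) =
      ↑(allPos c) + ↑((allPos x).map fun r => p ++ carity p c :: r)
  | [], .node ts, x, _ => by
    rw [cgraft_nil, carity_nil, allPos_node, allPos_node, allPosL_append]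
    simp only [allPosL_cons, allPosL, List.nil_append, List.append_nil, Nat.zero_add]
    rw [Multiset.coe_add]
    apply Multiset.coe_eq_coe.mpr
    simp
  | i :: q, .node ts, x, hp => by
    rw [mem_allPos_cons] at hp
    obtain ⟨hi, hq⟩ := hp
    have IH := allPos_cgraft q _ x hq
    rw [cgraft_cons, carity_cons]
    rw [allPos_node, allPos_node]
    have hset := allPosL_set hi ((ts.getD i dflt).1, cgraft x q (ts.getD i dflt).2)
      (E := (allPos x).map fun r => q ++ carity q (ts.getD i dflt).2 :: r) IH 0
    have hfun : ((fun x => (0 + i) :: x) ∘ fun r => q ++ carity q (ts.getD i dflt).2 :: r)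
        = fun r => (i :: q) ++ carity q (ts.getD i dflt).2 :: r := by
      funext r; simp
    simp only [← Multiset.cons_coe, hset, List.map_map, hfun, Multiset.cons_add]

theorem nil_not_mem_prunePos (c : CTree) : [] ∉ prunePos c := by
  obtain ⟨ts⟩ := c
  rw [prunePos_node, mem_prunePosL]
  rintro ⟨j, q, _, h, _⟩
  simp at h

theorem prunePos_cgraft : ∀ (p : List ℕ) (c : CTree) (x : CTree), p ∈ prunePos c →
    (↑(prunePos (cgraft x p c)) : Multiset (List ℕ)) =
      ↑(prunePos c) + ↑((allPos x).map fun r => p ++ carity p c :: r)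
  | [], c, x, hp => absurd hp (nil_not_mem_prunePos c)
  | i :: q, .node ts, x, hp => by
    rw [prunePos_node, mem_prunePosL] at hp
    obtain ⟨j, q', hj, he, hq⟩ := hp
    rw [List.cons.injEq] at he
    obtain ⟨rfl, rfl⟩ : i = j ∧ q = q' := ⟨by omega, he.2⟩
    rw [cgraft_cons, carity_cons]
    rw [prunePos_node, prunePos_node]
    have He : (↑(contrib ((ts.getD i dflt).1, cgraft x q (ts.getD i dflt).2)) :
        Multiset (List ℕ)) = ↑(contrib (ts.getD i dflt)) +
          ↑((allPos x).map fun r => q ++ carity q (ts.getD i dflt).2 :: r) := by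
      by_cases hb : (ts.getD i dflt).1
      · rw [if_pos hb] at hq
        simp only [contrib, hb, if_pos]
        exact allPos_cgraft q _ x hq
      · rw [if_neg hb] at hq
        simp only [contrib, hb, Bool.false_eq_true, if_false]
        exact prunePos_cgraft q _ x hq
    have hset := prunePosL_set hj _ He 0
    have hfun : ((fun x => (0 + i) :: x) ∘ fun r => q ++ carity q (ts.getD i dflt).2 :: r)
        = fun r => (i :: q) ++ carity q (ts.getD i dflt).2 :: r := by
      funext r; simp
    rw [hset, List.map_map, hfun]

theorem cgraft_graft : ∀ (p : List ℕ) (c : CTree), p ∈ allPos c → ∀ (x y : CTree) (r : List ℕ),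
    cgraft x (p ++ carity p c :: r) (cgraft y p c) = cgraft (cgraft x r y) p c
  | [], .node ts, _, x, y, r => by
    rw [cgraft_nil, carity_nil, List.nil_append, cgraft_cons, cgraft_nil]
    have h1 : (ts ++ [(false, y)]).getD ts.length dflt = (false, y) := by
      simp [List.getD_eq_getElem?_getD, List.getElem?_append_right]
    have h2 : ∀ v, (ts ++ [(false, y)]).set ts.length v = ts ++ [v] := by
      intro v
      rw [List.set_append, if_neg (by omega)]
      simp
    rw [h1, h2]
  | i :: q, .node ts, hp, x, y, r => by
    rw [mem_allPos_cons] at hp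
    obtain ⟨hi, hq⟩ := hp
    rw [cgraft_cons, List.cons_append, cgraft_cons, carity_cons]
    have h1 : (ts.set i ((ts.getD i dflt).1, cgraft y q (ts.getD i dflt).2)).getD i dflt =
        ((ts.getD i dflt).1, cgraft y q (ts.getD i dflt).2) := by
      rw [List.getD_eq_getElem _ _ (by simpa using hi), List.getElem_set_self]
    rw [h1, List.set_set, cgraft_graft q _ hq x y r, cgraft_cons]

end CTree
end AuxDev3
section AuxDev4
open List

namespace CTree

theorem ofTree_node (ts : List RTree) : ofTree (.node ts) = .node (ofTreeL ts) := rfl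

theorem forget_node (l : List (Bool × CTree)) : forget (.node l) = .node (forgetL l) := rfl

theorem pruneF_node (l : List (Bool × CTree)) : pruneF (.node l) = pruneFL l := rfl

theorem getD_ofTreeL (l : List RTree) (i : ℕ) :
    (ofTreeL l).getD i dflt = (false, ofTree (l.getD i (.node []))) := by
  rw [ofTreeL_eq]
  by_cases hi : i < l.length
  · rw [List.getD_eq_getElem _ _ (by simpa using hi), List.getD_eq_getElem _ _ hi,
      List.getElem_map]
  · rw [List.getD_eq_default _ _ (by simpa using not_lt.mp hi),
      List.getD_eq_default _ _ (not_lt.mp hi)]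
    simp [dflt, ofTree, ofTreeL]

theorem cgraft_ofTree : ∀ (r : List ℕ) (t₁ t₂ : RTree),
    cgraft (ofTree t₁) r (ofTree t₂) = ofTree (RTree.graftAt t₁ r t₂)
  | [], t₁, .node ts => by
    rw [ofTree_node, cgraft_nil, RTree.graftAt, ofTree_node]
    rw [ofTreeL_eq, ofTreeL_eq, List.map_append]
    rfl
  | i :: q, t₁, .node ts => by
    rw [ofTree_node, cgraft_cons, getD_ofTreeL, RTree.graftAt, ofTree_node]
    rw [cgraft_ofTree q t₁ _]
    rw [ofTreeL_eq, ofTreeL_eq, List.map_set]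

mutual
  theorem allPos_ofTree : ∀ (t : RTree), allPos (ofTree t) = RTree.vertices t
    | .node ts => by
      rw [ofTree_node, allPos_node, RTree.vertices, allPosL_ofTreeL 0 ts]
  theorem allPosL_ofTreeL : ∀ (n : ℕ) (ts : List RTree),
      allPosL n (ofTreeL ts) = RTree.verticesL n ts
    | n, [] => by simp [ofTreeL, allPosL, RTree.verticesL]
    | n, t :: ts => by
      rw [ofTreeL, allPosL, RTree.verticesL, allPos_ofTree t, allPosL_ofTreeL (n+1) ts]
end

theorem pairQ_node_perm {l l' : List (Bool × CTree)} (h : l.Perm l') :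
    pairQ (.node l) = pairQ (.node l') := by
  have h1 : tq (forget (.node l)) = tq (forget (.node l')) := by
    rw [forget_node, forget_node, forgetL_eq, forgetL_eq]
    exact tq_node_perm (h.map _)
  have h2 : forestQ (pruneF (.node l)) = forestQ (pruneF (.node l')) := by
    rw [pruneF_node, pruneF_node, pruneFL_eq, pruneFL_eq]
    apply forestQ_perm
    unfold List.flatMap
    exact (h.map _).flatten
  exact Prod.ext h1 h2

theorem pairQ_node_set {l : List (Bool × CTree)} {i : ℕ} (hi : i < l.length)
    (b : Bool) (a a' : CTree) (h : pairQ a = pairQ a') :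
    pairQ (.node (l.set i (b, a))) = pairQ (.node (l.set i (b, a'))) := by
  have h1 : tq a.forget = tq a'.forget := congrArg Prod.fst h
  have h2 : forestQ a.pruneF = forestQ a'.pruneF := congrArg Prod.snd h
  have c1 : tq (forget (.node (l.set i (b, a)))) = tq (forget (.node (l.set i (b, a')))) := by
    rw [forget_node, forget_node, forgetL_eq, forgetL_eq, List.map_set, List.map_set]
    exact tq_node_set (tq_eq_iff.mp h1)
  have c2 : forestQ (pruneF (.node (l.set i (b, a)))) =
      forestQ (pruneF (.node (l.set i (b, a')))) := by
    rw [pruneF_node, pruneF_node, pruneFL_eq, pruneFL_eq]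
    have hset : ∀ e : Bool × CTree, l.set i e = l.take i ++ e :: l.drop (i + 1) := by
      intro e; rw [List.set_eq_take_append_cons_drop, if_pos hi]
    rw [hset, hset, List.flatMap_append, List.flatMap_append, List.flatMap_cons,
      List.flatMap_cons]
    rw [forestQ_append, forestQ_append, forestQ_append, forestQ_append]
    congr 1
    congr 1
    cases b
    · simpa using h2
    · simpa [forestQ_singleton] using congrArg (fun s => ({s} : Multiset TreeQ)) h1
  exact Prod.ext c1 c2

theorem pairQ_cgraft_comm : ∀ (v : List ℕ) (c : CTree) (x y : CTree) (w : List ℕ),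
    v ∈ allPos c → w ∈ allPos c →
    pairQ (cgraft x w (cgraft y v c)) = pairQ (cgraft y v (cgraft x w c))
  | [], .node ts, x, y, [], _, _ => by
    rw [cgraft_nil, cgraft_nil, cgraft_nil, cgraft_nil]
    apply pairQ_node_perm
    simp only [List.append_assoc]
    exact List.Perm.append_left ts (List.Perm.swap _ _ _)
  | [], .node ts, x, y, j :: w', _, hw => by
    rw [mem_allPos_cons] at hw
    obtain ⟨hj, hw'⟩ := hw
    rw [cgraft_nil, cgraft_cons, cgraft_cons, cgraft_nil]
    rw [List.getD_append _ _ _ _ hj, List.set_append, if_pos hj]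
  | i :: v', .node ts, x, y, [], hv, _ => by
    rw [mem_allPos_cons] at hv
    obtain ⟨hi, hv'⟩ := hv
    rw [cgraft_cons, cgraft_nil, cgraft_nil, cgraft_cons]
    rw [List.getD_append _ _ _ _ hi, List.set_append, if_pos hi]
  | i :: v', .node ts, x, y, j :: w', hv, hw => by
    rw [mem_allPos_cons] at hv hw
    obtain ⟨hi, hv'⟩ := hv
    obtain ⟨hj, hw'⟩ := hw
    by_cases hij : i = j
    · subst hij
      rw [cgraft_cons, cgraft_cons, cgraft_cons, cgraft_cons]
      have hgs : ∀ e : Bool × CTree, (ts.set i e).getD i dflt = e := fun e => by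
        rw [List.getD_eq_getElem _ _ (by simpa using hi), List.getElem_set_self]
      rw [hgs, hgs, List.set_set, List.set_set]
      exact pairQ_node_set hi _ _ _ (pairQ_cgraft_comm v' _ x y w' hv' hw')
    · rw [cgraft_cons, cgraft_cons, cgraft_cons, cgraft_cons]
      have hg1 : ∀ e, (ts.set i e).getD j dflt = ts.getD j dflt := fun e => by
        rw [List.getD_eq_getElem _ _ (by simpa using hj), List.getD_eq_getElem _ _ hj,
          List.getElem_set_ne (by omega)]
      have hg2 : ∀ e, (ts.set j e).getD i dflt = ts.getD i dflt := fun e => by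
        rw [List.getD_eq_getElem _ _ (by simpa using hi), List.getD_eq_getElem _ _ hi,
          List.getElem_set_ne (by omega)]
      rw [hg1, hg2, List.set_comm _ _ hij]

end CTree
end AuxDev4
section AuxDev5
open List CTree

theorem pairQ_congr_δV {c c' : CTree} (h : pairQ c = pairQ c') : δV c = δV c' := by
  simp [δV, h]

theorem toMV_append (a b : List CTree) : toMV (a ++ b) = toMV a + toMV b := by
  simp [toMV]

theorem toMV_flatMap {α : Type*} (l : List α) (f : α → List CTree) :
    toMV (l.flatMap f) = (l.map fun a => toMV (f a)).sum := by
  induction l with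
  | nil => simp [toMV]
  | cons a l ih => simp [List.flatMap_cons, toMV_append, ih]

theorem toMV_perm {a b : List CTree} (h : a.Perm b) : toMV a = toMV b :=
  (h.map δV).sum_eq

theorem toMV_map_eq {α : Type*} (l : List α) (f : α → CTree) :
    toMV (l.map f) = (l.map fun a => δV (f a)).sum := by
  rw [toMV, List.map_map]
  rfl

theorem sum_map_comm {α β M : Type*} [AddCommMonoid M] (l₁ : List α) (l₂ : List β)
    (f : α → β → M) :
    (l₁.map fun a => (l₂.map (f a)).sum).sum =
      (l₂.map fun b => (l₁.map fun a => f a b).sum).sum := by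
  induction l₁ with
  | nil => simp
  | cons a l ih =>
    rw [List.map_cons, List.sum_cons, ih, ← List.sum_map_add]
    simp only [List.map_cons, List.sum_cons]

theorem key_sum (c₃ : CTree) (x y : RTree) :
    toMV ((dAct y c₃).flatMap fun w => dAct x w) -
      toMV ((rmulAll x y).flatMap fun u => dAct u c₃) =
    ((prunePos c₃).map fun v => ((prunePos c₃).map fun w =>
        δV (cgraft (ofTree x) w (cgraft (ofTree y) v c₃))).sum).sum := by
  have hstep : ∀ v ∈ prunePos c₃,
      toMV (dAct x (cgraft (ofTree y) v c₃)) =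
        ((prunePos c₃).map fun w => δV (cgraft (ofTree x) w (cgraft (ofTree y) v c₃))).sum +
        ((RTree.vertices y).map fun r =>
          δV (cgraft (ofTree (RTree.graftAt x r y)) v c₃)).sum := by
    intro v hv
    have hval : v ∈ allPos c₃ := prunePos_subset_allPos v c₃ hv
    have hperm : (prunePos (cgraft (ofTree y) v c₃)).Perm
        (prunePos c₃ ++ (RTree.vertices y).map fun r => v ++ carity v c₃ :: r) := by
      apply Multiset.coe_eq_coe.mp
      rw [← Multiset.coe_add, ← allPos_ofTree y]
      exact prunePos_cgraft v c₃ (ofTree y) hv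
    rw [show dAct x (cgraft (ofTree y) v c₃) = (prunePos (cgraft (ofTree y) v c₃)).map
        (fun p => cgraft (ofTree x) p (cgraft (ofTree y) v c₃)) from rfl]
    rw [toMV_perm (hperm.map _), List.map_append, toMV_append]
    congr 1
    · exact toMV_map_eq _ _
    · rw [List.map_map, toMV_map_eq]
      apply congrArg List.sum
      apply List.map_congr_left
      intro r _
      show δV (cgraft (ofTree x) (v ++ carity v c₃ :: r) (cgraft (ofTree y) v c₃)) = _
      rw [cgraft_graft v c₃ hval (ofTree x) (ofTree y) r, cgraft_ofTree]
  have h1 : toMV ((dAct y c₃).flatMap fun w => dAct x w)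
      = ((prunePos c₃).map fun v => toMV (dAct x (cgraft (ofTree y) v c₃))).sum := by
    rw [show dAct y c₃ = (prunePos c₃).map (fun p => cgraft (ofTree y) p c₃) from rfl]
    rw [toMV_flatMap, List.map_map]
    rfl
  have h2 : toMV ((rmulAll x y).flatMap fun u => dAct u c₃)
      = ((prunePos c₃).map fun v => ((RTree.vertices y).map fun r =>
          δV (cgraft (ofTree (RTree.graftAt x r y)) v c₃)).sum).sum := by
    have hc : toMV ((rmulAll x y).flatMap fun u => dAct u c₃)
        = ((RTree.vertices y).map fun r => ((prunePos c₃).map fun v =>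
            δV (cgraft (ofTree (RTree.graftAt x r y)) v c₃)).sum).sum := by
      rw [show rmulAll x y = (RTree.vertices y).map (fun p => RTree.graftAt x p y) from rfl]
      rw [toMV_flatMap, List.map_map]
      apply congrArg List.sum
      apply List.map_congr_left
      intro r _
      show toMV (dAct (RTree.graftAt x r y) c₃) = _
      rw [show dAct (RTree.graftAt x r y) c₃ = (prunePos c₃).map
          (fun p => cgraft (ofTree (RTree.graftAt x r y)) p c₃) from rfl, toMV_map_eq]
    have hswap : ((RTree.vertices y).map fun r => ((prunePos c₃).map fun v =>
            δV (cgraft (ofTree (RTree.graftAt x r y)) v c₃)).sum).sum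
        = ((prunePos c₃).map fun v => ((RTree.vertices y).map fun r =>
            δV (cgraft (ofTree (RTree.graftAt x r y)) v c₃)).sum).sum :=
      sum_map_comm _ _ _
    rw [hc, hswap]
  rw [h1, List.map_congr_left hstep, List.sum_map_add, h2]
  exact add_sub_cancel_right _ _

end AuxDev5

open CTree

theorem dAct_is_preLie_module (t₁ t₂ : RTree) (c₃ : CTree) (h₃ : c₃.adm = true) :
    toMV ((dAct t₂ c₃).flatMap fun w => dAct t₁ w) -
        toMV ((rmulAll t₁ t₂).flatMap fun u => dAct u c₃) =
      toMV ((dAct t₁ c₃).flatMap fun w => dAct t₂ w) -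
        toMV ((rmulAll t₂ t₁).flatMap fun u => dAct u c₃) := by
  rw [key_sum c₃ t₁ t₂, key_sum c₃ t₂ t₁]
  have h : ((prunePos c₃).map fun v => ((prunePos c₃).map fun w =>
        δV (cgraft (ofTree t₂) w (cgraft (ofTree t₁) v c₃))).sum).sum
      = ((prunePos c₃).map fun v => ((prunePos c₃).map fun w =>
        δV (cgraft (ofTree t₂) v (cgraft (ofTree t₁) w c₃))).sum).sum :=
    sum_map_comm _ _ _
  rw [h]
  apply congrArg List.sum
  apply List.map_congr_left
  intro v hv
  apply congrArg List.sum
  apply List.map_congr_left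
  intro w hw
  exact pairQ_congr_δV (pairQ_cgraft_comm v c₃ (ofTree t₁) (ofTree t₂) w
    (prunePos_subset_allPos _ _ hv) (prunePos_subset_allPos _ _ hw))
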